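/- arXiv:2505.20627 — 7 statements merged into one kernel-verified Lean document; each statement's English description precedes it below -/
import Mathlib

section
/- In a two-player zero-sum game over n responses with payoff matrix Ψ_{ij} = Ψ(P(y_i ≻ y_j)), if Ψ satisfies Ψ(t) ≥ Ψ(1/2) for all t in [1/2,1] and Ψ(t) < Ψ(1/2) for all t in [0,1/2), and y_1 is a Condorcet winning response (P(y_1 ≻ y_i) > 1/2 for all i ≠ 1), then any Nash equilibrium (π₁*, π₂*) has π₁* = δ₁ (the point mass on y_1). -/
open Finset

/-- A probability vector on `Fin n`. -/
def IsProb {n : ℕ} (π : Fin n → ℝ) : Prop := (∀ i, 0 ≤ π i) ∧ ∑ i, π i = 1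

/-- Expected payoff of the two-player game with payoff matrix `A`. -/
def payoff {n : ℕ} (A : Fin n → Fin n → ℝ) (π π' : Fin n → ℝ) : ℝ :=
  ∑ i, ∑ j, π i * π' j * A i j

/-- Nash equilibrium of the zero-sum game with payoff matrix `A`:
the first player maximizes, the second minimizes. -/
def IsNash {n : ℕ} (A : Fin n → Fin n → ℝ) (π₁ π₂ : Fin n → ℝ) : Prop :=
  IsProb π₁ ∧ IsProb π₂ ∧
  (∀ π, IsProb π → payoff A π π₂ ≤ payoff A π₁ π₂) ∧
  (∀ π', IsProb π' → payoff A π₁ π₂ ≤ payoff A π₁ π')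

/-!
Player 1 can secure `Ψ(1/2)` by playing the Condorcet winner, since `Ψ(P(y₁ ≻ y_j)) ≥ Ψ(1/2)` for
every `j`; hence so does any equilibrium strategy `π₁`, in particular against the pure reply `y₁`.
But against `y₁` every other response earns strictly less than `Ψ(1/2)`, so `π₁` cannot put any
mass on them.
-/

lemma isProb_single {n : ℕ} (i : Fin n) : IsProb (Pi.single i 1) :=
  ⟨fun j => (Pi.single_nonneg.mpr zero_le_one : (0 : Fin n → ℝ) ≤ Pi.single i 1) j,
    by simp⟩

lemma IsProb.le_sum_mul {n : ℕ} {π f : Fin n → ℝ} (hπ : IsProb π) {v : ℝ} (hf : ∀ i, v ≤ f i) :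
    v ≤ ∑ i, π i * f i :=
  calc v = ∑ i, π i * v := by rw [← sum_mul, hπ.2, one_mul]
    _ ≤ ∑ i, π i * f i := sum_le_sum fun i _ => mul_le_mul_of_nonneg_left (hf i) (hπ.1 i)

lemma IsProb.eq_single_of_le_sum_mul {n : ℕ} {π f : Fin n → ℝ} (hπ : IsProb π) {v : ℝ}
    {i₀ : Fin n} (hi₀ : f i₀ ≤ v) (hlt : ∀ i, i ≠ i₀ → f i < v) (hv : v ≤ ∑ i, π i * f i) :
    π = Pi.single i₀ 1 := by
  have hle : ∀ i, f i ≤ v := fun i => by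
    by_cases h : i = i₀
    · rwa [h]
    · exact (hlt i h).le
  have hgap : ∀ i, 0 ≤ π i * (v - f i) := fun i => mul_nonneg (hπ.1 i) (sub_nonneg.mpr (hle i))
  have hsum : ∑ i, π i * (v - f i) = 0 := by
    refine le_antisymm ?_ (sum_nonneg fun i _ => hgap i)
    simp only [mul_sub, sum_sub_distrib, ← sum_mul, hπ.2, one_mul]
    linarith
  have hzero : ∀ i, i ≠ i₀ → π i = 0 := fun i hi => by
    have hterm := (sum_eq_zero_iff_of_nonneg fun i _ => hgap i).mp hsum i (mem_univ i)
    exact (mul_eq_zero.mp hterm).resolve_right (sub_ne_zero.mpr (hlt i hi).ne')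
  have hone : π i₀ = 1 := by
    rw [← hπ.2, sum_eq_single i₀ (fun i _ hi => hzero i hi) (by simp)]
  funext i
  rw [Pi.single_apply]
  split_ifs with h
  · rw [h, hone]
  · exact hzero i h

lemma payoff_single_left {n : ℕ} (A : Fin n → Fin n → ℝ) (i : Fin n) (π' : Fin n → ℝ) :
    payoff A (Pi.single i 1) π' = ∑ j, π' j * A i j := by
  simp [payoff, Pi.single_apply]

lemma payoff_single_right {n : ℕ} (A : Fin n → Fin n → ℝ) (π : Fin n → ℝ) (j : Fin n) :
    payoff A π (Pi.single j 1) = ∑ i, π i * A i j := by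
  simp [payoff, Pi.single_apply]

lemma IsNash.payoff_single_le_payoff_single {n : ℕ} {A : Fin n → Fin n → ℝ} {π₁ π₂ : Fin n → ℝ}
    (h : IsNash A π₁ π₂) (i j : Fin n) :
    payoff A (Pi.single i 1) π₂ ≤ payoff A π₁ (Pi.single j 1) :=
  (h.2.2.1 _ (isProb_single i)).trans (h.2.2.2 _ (isProb_single j))

lemma IsNash.fst_eq_single_of_saddle {n : ℕ} {A : Fin n → Fin n → ℝ} {π₁ π₂ : Fin n → ℝ}
    (h : IsNash A π₁ π₂) {i₀ : Fin n} (hrow : ∀ j, A i₀ i₀ ≤ A i₀ j)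
    (hcol : ∀ i, i ≠ i₀ → A i i₀ < A i₀ i₀) : π₁ = Pi.single i₀ 1 := by
  have hsecure : A i₀ i₀ ≤ payoff A (Pi.single i₀ 1) π₂ := by
    rw [payoff_single_left]
    exact h.2.1.le_sum_mul hrow
  have hreach : A i₀ i₀ ≤ ∑ i, π₁ i * A i i₀ := by
    rw [← payoff_single_right]
    exact hsecure.trans (h.payoff_single_le_payoff_single i₀ i₀)
  exact h.1.eq_single_of_le_sum_mul le_rfl hcol hreach

theorem stmt_0 {n : ℕ} (P : Fin n → Fin n → ℝ) (Ψ : ℝ → ℝ)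
    (hP01 : ∀ i j, 0 ≤ P i j ∧ P i j ≤ 1)
    (hPanti : ∀ i j, P i j + P j i = 1)
    (hΨge : ∀ t : ℝ, 1 / 2 ≤ t → t ≤ 1 → Ψ (1 / 2) ≤ Ψ t)
    (hΨlt : ∀ t : ℝ, 0 ≤ t → t < 1 / 2 → Ψ t < Ψ (1 / 2))
    (i₀ : Fin n)
    (hCond : ∀ i, i ≠ i₀ → 1 / 2 < P i₀ i)
    (π₁ π₂ : Fin n → ℝ)
    (hNash : IsNash (fun i j => Ψ (P i j)) π₁ π₂) :
    π₁ = fun i => if i = i₀ then 1 else 0 := by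
  have hdiag : P i₀ i₀ = 1 / 2 := by linarith [hPanti i₀ i₀]
  have hrow : ∀ j, Ψ (P i₀ i₀) ≤ Ψ (P i₀ j) := fun j => by
    rw [hdiag]
    by_cases hj : j = i₀
    · rw [hj, hdiag]
    · exact hΨge _ (hCond j hj).le (hP01 i₀ j).2
  have hcol : ∀ i, i ≠ i₀ → Ψ (P i i₀) < Ψ (P i₀ i₀) := fun i hi => by
    rw [hdiag]
    exact hΨlt _ (hP01 i i₀).1 (by linarith [hPanti i₀ i, hCond i hi])
  rw [hNash.fst_eq_single_of_saddle hrow hcol]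
  funext i
  exact Pi.single_apply i₀ 1 i
end

section
/- Consider the 2-response game with payoff matrix [[Ψ(1/2), Ψ(t)],[Ψ(1−t), Ψ(1/2)]] for some t ∈ (1/2, 1]. If every Nash equilibrium of this game has first-player strategy equal to δ₁, then Ψ(1−t) < Ψ(1/2) ≤ Ψ(t). -/
open Finset

/-!
If the conclusion fails, i.e. `Ψ(1/2) ≤ Ψ(1-t)` or `Ψ(t) < Ψ(1/2)`, the game has an equilibrium
in which the first player puts positive weight on the second response: the pure profile
`(δ₂, δ₂)` when `Ψ(t) ≤ Ψ(1/2) ≤ Ψ(1-t)`, and otherwise the equalizing mixed profile, whose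
weight on the second response is `(Ψ(t) - Ψ(1/2)) / (Ψ(t) + Ψ(1-t) - 2 Ψ(1/2)) ≠ 0`.
-/

section Certificate

variable {n : ℕ} {A : Fin n → Fin n → ℝ} {π π' : Fin n → ℝ} {v : ℝ}

lemma payoff_le_of_forall_row (hπ : IsProb π) (h : ∀ i, ∑ j, π' j * A i j ≤ v) :
    payoff A π π' ≤ v :=
  calc payoff A π π' = ∑ i, π i * ∑ j, π' j * A i j := by
        simp only [payoff, mul_sum, mul_assoc]
    _ ≤ ∑ i, π i * v := sum_le_sum fun i _ => mul_le_mul_of_nonneg_left (h i) (hπ.1 i)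
    _ = v := by rw [← sum_mul, hπ.2, one_mul]

lemma le_payoff_of_forall_col (hπ' : IsProb π') (h : ∀ j, v ≤ ∑ i, π i * A i j) :
    v ≤ payoff A π π' :=
  calc v = ∑ j, π' j * v := by rw [← sum_mul, hπ'.2, one_mul]
    _ ≤ ∑ j, π' j * ∑ i, π i * A i j :=
        sum_le_sum fun j _ => mul_le_mul_of_nonneg_left (h j) (hπ'.1 j)
    _ = payoff A π π' := by
        rw [payoff, sum_comm]
        simp only [mul_sum]
        exact sum_congr rfl fun _ _ => sum_congr rfl fun _ _ => by ring

lemma isNash_of_value {π₁ π₂ : Fin n → ℝ} (h₁ : IsProb π₁) (h₂ : IsProb π₂)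
    (hrow : ∀ i, ∑ j, π₂ j * A i j ≤ v) (hcol : ∀ j, v ≤ ∑ i, π₁ i * A i j) :
    IsNash A π₁ π₂ :=
  ⟨h₁, h₂,
    fun _ hπ => (payoff_le_of_forall_row hπ hrow).trans (le_payoff_of_forall_col h₂ hcol),
    fun _ hπ' => (payoff_le_of_forall_row h₁ hrow).trans (le_payoff_of_forall_col hπ' hcol)⟩

end Certificate

lemma isProb_pair {x y : ℝ} (hx : 0 ≤ x) (hy : 0 ≤ y) (hxy : x + y = 1) : IsProb ![x, y] :=
  ⟨fun i => by fin_cases i <;> assumption, by simpa [Fin.sum_univ_two] using hxy⟩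

section SymmetricDiagonal

variable {a b c : ℝ}

lemma isNash_pure_second (hb : b ≤ a) (hc : a ≤ c) :
    IsNash !![a, b; c, a] ![0, 1] ![0, 1] := by
  have hδ : IsProb ![(0 : ℝ), 1] := isProb_pair le_rfl zero_le_one (zero_add 1)
  refine isNash_of_value (v := a) hδ hδ (fun i => ?_) (fun j => ?_)
  · fin_cases i <;> simp [Fin.sum_univ_two, hb]
  · fin_cases j <;> simp [Fin.sum_univ_two, hc]

lemma isNash_equalizing (hsign : 0 ≤ (b - a) * (c - a)) (hs : b + c - 2 * a ≠ 0) :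
    IsNash !![a, b; c, a]
      ![(c - a) / (b + c - 2 * a), (b - a) / (b + c - 2 * a)]
      ![(b - a) / (b + c - 2 * a), (c - a) / (b + c - 2 * a)] := by
  set s := b + c - 2 * a with hs_def
  -- `x / s` has the sign of `x * s = x ^ 2 + x * y` for `{x, y} = {b - a, c - a}`
  have hb : 0 ≤ (b - a) / s := by
    rw [← mul_div_mul_right _ _ hs, hs_def]; apply div_nonneg <;> nlinarith [sq_nonneg s]
  have hc : 0 ≤ (c - a) / s := by
    rw [← mul_div_mul_right _ _ hs, hs_def]; apply div_nonneg <;> nlinarith [sq_nonneg s]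
  have hsum : (c - a) / s + (b - a) / s = 1 := by
    rw [← add_div, div_eq_one_iff_eq hs]; ring
  refine isNash_of_value (v := (b * c - a ^ 2) / s) (isProb_pair hc hb hsum)
    (isProb_pair hb hc (by linarith)) (fun k => le_of_eq ?_) (fun k => ge_of_eq ?_)
  all_goals fin_cases k
  all_goals
    simp only [Fin.zero_eta, Fin.mk_one, Fin.isValue, Matrix.of_apply, Matrix.cons_val',
      Matrix.cons_val_fin_one, Matrix.cons_val_zero, Matrix.cons_val_one, Fin.sum_univ_two]
    field_simp
    ring

lemma lt_and_le_of_forall_isNash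
    (h : ∀ π₁ π₂, IsNash !![a, b; c, a] π₁ π₂ → π₁ 1 = 0) : c < a ∧ a ≤ b := by
  have equalizing_absurd (hsign : 0 ≤ (b - a) * (c - a)) (hs : b + c - 2 * a ≠ 0)
      (hba : b ≠ a) : False :=
    div_ne_zero (sub_ne_zero.2 hba) hs (h _ _ (isNash_equalizing hsign hs))
  rcases le_or_gt a c with hac | hca
  · rcases le_or_gt b a with hba | hab
    · simpa using h _ _ (isNash_pure_second hba hac)
    · exact (equalizing_absurd (by nlinarith) (by linarith) hab.ne').elim
  · exact ⟨hca, not_lt.1 fun hba => equalizing_absurd (by nlinarith) (by linarith) hba.ne⟩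

end SymmetricDiagonal

theorem stmt_1_general (Ψ : ℝ → ℝ) (t : ℝ)
    (hUnique : ∀ π₁ π₂ : Fin 2 → ℝ,
      IsNash (fun i j => (!![Ψ (1 / 2), Ψ t; Ψ (1 - t), Ψ (1 / 2)] : Matrix (Fin 2) (Fin 2) ℝ) i j) π₁ π₂ →
      π₁ = fun i => if i = 0 then 1 else 0) :
    Ψ (1 - t) < Ψ (1 / 2) ∧ Ψ (1 / 2) ≤ Ψ t :=
  lt_and_le_of_forall_isNash fun π₁ π₂ hN => by simpa using congrFun (hUnique π₁ π₂ hN) 1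

theorem stmt_1 (Ψ : ℝ → ℝ) (t : ℝ) (ht : 1 / 2 < t) (ht1 : t ≤ 1)
    (hUnique : ∀ π₁ π₂ : Fin 2 → ℝ,
      IsNash (fun i j => (!![Ψ (1 / 2), Ψ t; Ψ (1 - t), Ψ (1 / 2)] : Matrix (Fin 2) (Fin 2) ℝ) i j) π₁ π₂ →
      π₁ = fun i => if i = 0 then 1 else 0) :
    Ψ (1 - t) < Ψ (1 / 2) ∧ Ψ (1 / 2) ≤ Ψ t :=
  stmt_1_general Ψ t hUnique
end

section
/- Suppose Ψ satisfies Ψ(t) + Ψ(1−t) ≥ 2Ψ(1/2) for all t ∈ [0,1] and Ψ(t) < Ψ(1/2) for all t ∈ [0,1/2). If there is no Condorcet winning response (i.e., for every i there exists j with P(y_i ≻ y_j) < 1/2), then for any Nash equilibrium (π₁*, π₂*), the first-player strategy π₁* is not a point mass (it is a mixed strategy supported on at least two responses). -/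
open Finset

variable {n : ℕ}

theorem IsProb.single (i : Fin n) : IsProb (Pi.single i (1 : ℝ)) :=
  ⟨fun j => by by_cases h : j = i <;> simp [h], by simp⟩

theorem IsProb.exists_eq_single {π : Fin n → ℝ} (hπ : IsProb π)
    (hcard : (univ.filter (fun i => 0 < π i)).card ≤ 1) : ∃ i, π = Pi.single i 1 := by
  obtain ⟨hnonneg, hsum⟩ := hπ
  have hzero_of_not_pos : ∀ i, ¬ 0 < π i → π i = 0 := fun i h =>
    le_antisymm (not_lt.mp h) (hnonneg i)
  obtain ⟨i, hi⟩ : (univ.filter (fun i => 0 < π i)).Nonempty := by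
    by_contra hempty
    have : ∑ i, π i = 0 := sum_eq_zero fun i _ =>
      hzero_of_not_pos i fun hpos => hempty ⟨i, by simp [hpos]⟩
    linarith
  have hzero : ∀ j, j ≠ i → π j = 0 := fun j hj => hzero_of_not_pos j fun hpos =>
    hj (card_le_one.mp hcard j (by simp [hpos]) i hi)
  have hone : π i = 1 := by
    rwa [sum_eq_single i (fun j _ hj => hzero j hj) (by simp)] at hsum
  refine ⟨i, funext fun j => ?_⟩
  by_cases hj : j = i
  · simp [hj, hone]
  · simp [hj, hzero j hj]

theorem payoff_single_single (A : Fin n → Fin n → ℝ) (i j : Fin n) :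
    payoff A (Pi.single i 1) (Pi.single j 1) = A i j := by
  simp [payoff, Pi.single_apply]

/-- The diagonal payoff is the average of `A i j` and `A j i` under `π ⊗ π`. -/
theorem le_payoff_self {A : Fin n → Fin n → ℝ} {c : ℝ} (hA : ∀ i j, 2 * c ≤ A i j + A j i)
    {π : Fin n → ℝ} (hπ : IsProb π) : c ≤ payoff A π π := by
  obtain ⟨hnonneg, hsum⟩ := hπ
  suffices 2 * c ≤ 2 * payoff A π π by linarith
  calc 2 * c = ∑ i, ∑ j, π i * π j * (2 * c) := by
        simp only [← sum_mul, ← mul_sum, hsum, mul_one, one_mul]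
    _ ≤ ∑ i, ∑ j, π i * π j * (A i j + A j i) :=
        sum_le_sum fun i _ => sum_le_sum fun j _ =>
          mul_le_mul_of_nonneg_left (hA i j) (mul_nonneg (hnonneg i) (hnonneg j))
    _ = 2 * payoff A π π := by
        simp only [payoff, mul_add, sum_add_distrib]
        rw [sum_comm (f := fun i j => π i * π j * A j i)]
        simp only [mul_comm (π _) (π _)]
        ring

/-- The row player could copy the column player's strategy `π₂`, which earns at least `c`
against itself. -/
theorem IsNash.le_of_single {A : Fin n → Fin n → ℝ} {c : ℝ} (hA : ∀ i j, 2 * c ≤ A i j + A j i)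
    {i : Fin n} {π₂ : Fin n → ℝ} (hNash : IsNash A (Pi.single i 1) π₂) (j : Fin n) :
    c ≤ A i j := by
  obtain ⟨-, hπ₂, hrow, hcol⟩ := hNash
  calc c ≤ payoff A π₂ π₂ := le_payoff_self hA hπ₂
    _ ≤ payoff A (Pi.single i 1) π₂ := hrow π₂ hπ₂
    _ ≤ payoff A (Pi.single i 1) (Pi.single j 1) := hcol _ (IsProb.single j)
    _ = A i j := payoff_single_single A i j

theorem stmt_3_general {n : ℕ} (P : Fin n → Fin n → ℝ) (Ψ : ℝ → ℝ)
    (hP01 : ∀ i j, 0 ≤ P i j ∧ P i j ≤ 1)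
    (hPanti : ∀ i j, P i j + P j i = 1)
    (hΨsym : ∀ t : ℝ, 0 ≤ t → t ≤ 1 → 2 * Ψ (1 / 2) ≤ Ψ t + Ψ (1 - t))
    (hΨlt : ∀ t : ℝ, 0 ≤ t → t < 1 / 2 → Ψ t < Ψ (1 / 2))
    (hNoCondorcet : ∀ i, ∃ j, P i j < 1 / 2)
    (π₁ π₂ : Fin n → ℝ)
    (hNash : IsNash (fun i j => Ψ (P i j)) π₁ π₂) :
    1 < (Finset.univ.filter (fun i => 0 < π₁ i)).card := by
  by_contra! hcard
  obtain ⟨i, rfl⟩ := hNash.1.exists_eq_single hcard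
  have hA : ∀ a b, 2 * Ψ (1 / 2) ≤ Ψ (P a b) + Ψ (P b a) := fun a b => by
    simpa [← hPanti a b] using hΨsym (P a b) (hP01 a b).1 (hP01 a b).2
  obtain ⟨j, hj⟩ := hNoCondorcet i
  exact (hΨlt (P i j) (hP01 i j).1 hj).not_ge (hNash.le_of_single hA j)

theorem stmt_3 {n : ℕ} (P : Fin n → Fin n → ℝ) (Ψ : ℝ → ℝ)
    (hP01 : ∀ i j, 0 ≤ P i j ∧ P i j ≤ 1)
    (hPanti : ∀ i j, P i j + P j i = 1)
    (hNoTie : ∀ i j, i ≠ j → P i j ≠ 1 / 2)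
    (hΨsym : ∀ t : ℝ, 0 ≤ t → t ≤ 1 → 2 * Ψ (1 / 2) ≤ Ψ t + Ψ (1 - t))
    (hΨlt : ∀ t : ℝ, 0 ≤ t → t < 1 / 2 → Ψ t < Ψ (1 / 2))
    (hNoCondorcet : ∀ i, ∃ j, P i j < 1 / 2)
    (π₁ π₂ : Fin n → ℝ)
    (hNash : IsNash (fun i j => Ψ (P i j)) π₁ π₂) :
    1 < (Finset.univ.filter (fun i => 0 < π₁ i)).card :=
  stmt_3_general P Ψ hP01 hPanti hΨsym hΨlt hNoCondorcet π₁ π₂ hNash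
end

section
/- Let M₋ < Ψ(1/2) ≤ M₊ and define Ψ(t) = M₋ for t ∈ [0,1/2), Ψ(1/2) at t = 1/2, and M₊ for t ∈ (1/2,1]. If there is no Condorcet winning response, then no Nash equilibrium of the induced game has a pure first-player strategy; i.e., any Nash solution is mixed. -/
open Finset

/-!
If the first player plays the pure strategy `i₀` and `j₀` beats `i₀`, the two equilibrium
conditions give `payoff(π₂, π₂) ≤ payoff(i₀, π₂) ≤ payoff(i₀, j₀) = M₋`. But every entry
`Ψ(P(yᵢ ≻ yⱼ))` is at least `M₋`, and the diagonal ones equal `Ψ(1/2) > M₋`, so any mixed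
strategy played against itself earns strictly more than `M₋`.
-/

/-- The function `Ψ` of the statement. -/
noncomputable def psiStep (Mlo c Mhi t : ℝ) : ℝ :=
  if t < 1 / 2 then Mlo else if t = 1 / 2 then c else Mhi

lemma psiStep_of_lt_half {Mlo c Mhi t : ℝ} (ht : t < 1 / 2) : psiStep Mlo c Mhi t = Mlo :=
  if_pos ht

lemma psiStep_half (Mlo c Mhi : ℝ) : psiStep Mlo c Mhi (1 / 2) = c := by
  simp [psiStep]

lemma le_psiStep {Mlo c Mhi : ℝ} (hc : Mlo ≤ c) (hMhi : c ≤ Mhi) (t : ℝ) :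
    Mlo ≤ psiStep Mlo c Mhi t := by
  unfold psiStep
  split_ifs <;> linarith

def pureStrategy {n : ℕ} (i : Fin n) : Fin n → ℝ := fun k => if k = i then 1 else 0

lemma isProb_pureStrategy {n : ℕ} (i : Fin n) : IsProb (pureStrategy i) :=
  ⟨fun k => by unfold pureStrategy; split_ifs <;> norm_num, by simp [pureStrategy]⟩

lemma payoff_pureStrategy {n : ℕ} (A : Fin n → Fin n → ℝ) (i j : Fin n) :
    payoff A (pureStrategy i) (pureStrategy j) = A i j := by
  simp [payoff, pureStrategy]

lemma IsProb.exists_pos {n : ℕ} {π : Fin n → ℝ} (hπ : IsProb π) : ∃ k, 0 < π k := by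
  by_contra! h
  have : ∑ i, π i ≤ 0 := sum_nonpos fun i _ => h i
  linarith [hπ.2]

lemma lt_payoff_self {n : ℕ} {A : Fin n → Fin n → ℝ} {π : Fin n → ℝ} {m : ℝ}
    (hπ : IsProb π) (hA : ∀ i j, m ≤ A i j) (hdiag : ∀ i, m < A i i) :
    m < payoff A π π := by
  obtain ⟨k, hk⟩ := hπ.exists_pos
  have hweights : ∀ i j, 0 ≤ π i * π j := fun i j => mul_nonneg (hπ.1 i) (hπ.1 j)
  calc m = ∑ i, ∑ j, π i * π j * m := by
        simp only [← sum_mul, ← mul_sum, hπ.2, mul_one, one_mul]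
    _ < payoff A π π := by
        refine sum_lt_sum (fun i _ => sum_le_sum fun j _ =>
          mul_le_mul_of_nonneg_left (hA i j) (hweights i j)) ⟨k, mem_univ k, ?_⟩
        refine sum_lt_sum (fun j _ =>
          mul_le_mul_of_nonneg_left (hA k j) (hweights k j)) ⟨k, mem_univ k, ?_⟩
        exact mul_lt_mul_of_pos_left (hdiag k) (mul_pos hk hk)

lemma IsNash.payoff_self_le {n : ℕ} {A : Fin n → Fin n → ℝ} {π₁ π₂ : Fin n → ℝ}
    (h : IsNash A π₁ π₂) {π' : Fin n → ℝ} (hπ' : IsProb π') :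
    payoff A π₂ π₂ ≤ payoff A π₁ π' :=
  (h.2.2.1 π₂ h.2.1).trans (h.2.2.2 π' hπ')

theorem stmt_8_general {n : ℕ} (P : Fin n → Fin n → ℝ) (Mlo Mhi c : ℝ)
    (hM : Mlo < c) (hM' : c ≤ Mhi)
    (hPanti : ∀ i j, P i j + P j i = 1)
    (hNoCondorcet : ∀ i, ∃ j, P i j < 1 / 2)
    (π₁ π₂ : Fin n → ℝ)
    (hNash : IsNash
      (fun i j => if P i j < 1 / 2 then Mlo else if P i j = 1 / 2 then c else Mhi) π₁ π₂) :
    ¬ ∃ i₀, π₁ = fun i => if i = i₀ then (1 : ℝ) else 0 := by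
  rintro ⟨i₀, rfl⟩
  replace hNash : IsNash (fun i j => psiStep Mlo c Mhi (P i j)) (pureStrategy i₀) π₂ := hNash
  obtain ⟨j₀, hj₀⟩ := hNoCondorcet i₀
  have hupper : payoff (fun i j => psiStep Mlo c Mhi (P i j)) π₂ π₂ ≤ Mlo := by
    simpa only [payoff_pureStrategy, psiStep_of_lt_half hj₀] using
      hNash.payoff_self_le (isProb_pureStrategy j₀)
  have hdiag : ∀ i, Mlo < psiStep Mlo c Mhi (P i i) := fun i => by
    rwa [show P i i = 1 / 2 by linarith [hPanti i i], psiStep_half]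
  have hlower : Mlo < payoff (fun i j => psiStep Mlo c Mhi (P i j)) π₂ π₂ :=
    lt_payoff_self hNash.2.1 (fun i j => le_psiStep hM.le hM' (P i j)) hdiag
  linarith

theorem stmt_8 {n : ℕ} (P : Fin n → Fin n → ℝ) (Mlo Mhi c : ℝ)
    (hM : Mlo < c) (hM' : c ≤ Mhi)
    (hP01 : ∀ i j, 0 ≤ P i j ∧ P i j ≤ 1)
    (hPanti : ∀ i j, P i j + P j i = 1)
    (hNoTie : ∀ i j, i ≠ j → P i j ≠ 1 / 2)
    (hNoCondorcet : ∀ i, ∃ j, P i j < 1 / 2)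
    (π₁ π₂ : Fin n → ℝ)
    (hNash : IsNash
      (fun i j => if P i j < 1 / 2 then Mlo else if P i j = 1 / 2 then c else Mhi) π₁ π₂) :
    ¬ ∃ i₀, π₁ = fun i => if i = i₀ then (1 : ℝ) else 0 :=
  stmt_8_general P Mlo Mhi c hM hM' hPanti hNoCondorcet π₁ π₂ hNash
end

section
/- Let A ∈ ℝ^{n×n} be a payoff matrix such that the zero-sum game max_π min_{π'} Σ_{i,j} π_i π'_j A_{ij} has a unique maximin solution π* with π* > 0, and let (u*, t*) be the associated KKT multipliers. Then u*_j > 0 for every j ∈ [n], and Σ_i π*_i A_{ij} = t* for every j ∈ [n]. -/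
/-!
Suppose `u j₀ = 0`. Since `A u = t 𝟙`, the linear map `d ↦ (∑ d, dᵀA)` takes values in the
hyperplane orthogonal to `(-t, u)`, which has dimension `n`. So either the map has a nonzero
kernel, or it is onto that hyperplane and hits `(0, e_{j₀})`, which lies in it because `u j₀ = 0`.
Either way there is `d ≠ 0` with `∑ d = 0` and `dᵀA ≥ 0`, and then `π* + ε d` is another maximin
strategy for small `ε > 0`, contradicting uniqueness. Complementary slackness then turns `u > 0`
into the equalities.
-/

open Finset

/-- The worst-case payoff for the first player playing `π`. -/
noncomputable def worstCase {n : ℕ} (A : Fin n → Fin n → ℝ) (π : Fin n → ℝ) : ℝ :=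
  sInf ((fun π' => payoff A π π') '' {π' | IsProb π'})

/-- `π` is an optimal maximin strategy for the first player. -/
def IsMaximin {n : ℕ} (A : Fin n → Fin n → ℝ) (π : Fin n → ℝ) : Prop :=
  IsProb π ∧ ∀ π', IsProb π' → worstCase A π' ≤ worstCase A π

open Matrix Filter Topology

namespace Matrix

variable {m k K : Type*} [Fintype m] [Fintype k] [Field K]

theorem exists_ne_zero_vecMul_eq_zero_or_exists_vecMul_eq {B : Matrix m k K}
    (hcard : Fintype.card k ≤ Fintype.card m + 1) {w : k → K} (hw : w ≠ 0) (hBw : B *ᵥ w = 0)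
    {y : k → K} (hy : y ⬝ᵥ w = 0) : (∃ d ≠ 0, d ᵥ* B = 0) ∨ ∃ d, d ᵥ* B = y := by
  by_cases hB : Function.Injective B.vecMul
  swap
  · left
    rw [← coe_vecMulLinear, injective_iff_map_eq_zero] at hB
    push Not at hB
    simpa [and_comm] using hB
  right
  let f : Module.Dual K (k → K) := (dotProductBilin K K).flip w
  have hf : f ≠ 0 := by
    classical
    intro h
    exact hw (funext fun j => by simpa [f] using LinearMap.congr_fun h (Pi.single j 1))
  have hrange : LinearMap.range B.vecMulLinear ≤ LinearMap.ker f := by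
    rintro _ ⟨d, rfl⟩
    simp [f, ← dotProduct_mulVec, hBw]
  have hfinrank := Module.Dual.finrank_ker_add_one_of_ne_zero hf
  have heq : LinearMap.range B.vecMulLinear = LinearMap.ker f := by
    refine Submodule.eq_of_le_of_finrank_le hrange ?_
    rw [LinearMap.finrank_range_of_inj hB]
    simp only [Module.finrank_fintype_fun_eq_card] at hfinrank ⊢
    omega
  exact LinearMap.mem_range.1 (heq.ge hy)

end Matrix

theorem exists_ne_zero_sum_eq_zero_vecMul_nonneg {ι κ : Type*} [Fintype ι] [Fintype κ]
    {A : Matrix ι κ ℝ} (hcard : Fintype.card κ ≤ Fintype.card ι) {u : κ → ℝ} {t : ℝ}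
    (hu : u ≠ 0) (hAu : A *ᵥ u = fun _ => t) {j₀ : κ} (hj₀ : u j₀ = 0) :
    ∃ d ≠ 0, ∑ i, d i = 0 ∧ 0 ≤ d ᵥ* A := by
  classical
  let B : Matrix ι (Unit ⊕ κ) ℝ := fromCols (replicateCol Unit 1) A
  let w : Unit ⊕ κ → ℝ := Sum.elim (fun _ => -t) u
  have hBw : B *ᵥ w = 0 := by
    rw [fromCols_mulVec_sumElim, hAu]
    ext
    simp [mulVec, dotProduct]
  have hw : w ≠ 0 := fun h => hu (funext fun j => by simpa [w] using congrFun h (Sum.inr j))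
  have hcard' : Fintype.card (Unit ⊕ κ) ≤ Fintype.card ι + 1 := by simpa [add_comm] using hcard
  have hdecode : ∀ (d : ι → ℝ) (y : κ → ℝ), d ᵥ* B = Sum.elim (0 : Unit → ℝ) y →
      ∑ i, d i = 0 ∧ d ᵥ* A = y := by
    intro d y hd
    have hd' := congrFun hd
    rw [vecMul_fromCols] at hd'
    exact ⟨by simpa [vecMul, dotProduct] using hd' (.inl ()), funext fun j => hd' (.inr j)⟩
  rcases exists_ne_zero_vecMul_eq_zero_or_exists_vecMul_eq hcard' hw hBw
      (y := Sum.elim (0 : Unit → ℝ) (Pi.single j₀ 1)) (by simp [w, hj₀])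
    with ⟨d, hd0, hd⟩ | ⟨d, hd⟩
  · obtain ⟨hsum, hdA⟩ := hdecode d 0 (by rw [hd, Sum.elim_zero_zero])
    exact ⟨d, hd0, hsum, hdA.ge⟩
  · obtain ⟨hsum, hdA⟩ := hdecode d _ hd
    refine ⟨d, ?_, hsum, hdA ▸ Pi.single_nonneg.2 zero_le_one⟩
    rintro rfl
    simpa using congrFun hdA j₀

section Game

variable {n : ℕ} {A : Fin n → Fin n → ℝ}

theorem payoff_eq_vecMul_dotProduct (π π' : Fin n → ℝ) :
    payoff A π π' = (π ᵥ* of A) ⬝ᵥ π' := by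
  simp only [payoff, vecMul, dotProduct, of_apply, sum_mul]
  rw [sum_comm]
  exact sum_congr rfl fun _ _ => sum_congr rfl fun _ _ => by ring

theorem bddBelow_payoff (π : Fin n → ℝ) :
    BddBelow ((fun π' => payoff A π π') '' {π' | IsProb π'}) := by
  obtain ⟨a, ha⟩ := (Set.finite_range (π ᵥ* of A)).bddBelow
  refine ⟨a, ?_⟩
  rintro _ ⟨π', hπ', rfl⟩
  dsimp only
  rw [payoff_eq_vecMul_dotProduct]
  calc a = ∑ j, a * π' j := by rw [← mul_sum, hπ'.2, mul_one]
    _ ≤ ∑ j, (π ᵥ* of A) j * π' j :=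
      sum_le_sum fun j _ => mul_le_mul_of_nonneg_right (ha ⟨j, rfl⟩) (hπ'.1 j)

theorem worstCase_le_payoff {π π' : Fin n → ℝ} (hπ' : IsProb π') :
    worstCase A π ≤ payoff A π π' :=
  csInf_le (bddBelow_payoff π) ⟨π', hπ', rfl⟩

theorem worstCase_mono {π₁ π₂ : Fin n → ℝ}
    (h : ∀ π', IsProb π' → payoff A π₁ π' ≤ payoff A π₂ π') :
    worstCase A π₁ ≤ worstCase A π₂ := by
  rcases Set.eq_empty_or_nonempty {π' : Fin n → ℝ | IsProb π'} with hempty | hne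
  · simp [worstCase, hempty]
  · refine le_csInf (hne.image _) ?_
    rintro _ ⟨π', hπ', rfl⟩
    exact (worstCase_le_payoff hπ').trans (h π' hπ')

theorem IsMaximin.add_smul {π d : Fin n → ℝ} {c : ℝ} (hπ : IsMaximin A π) (hc : 0 ≤ c)
    (hdA : 0 ≤ d ᵥ* of A) (hπd : IsProb (π + c • d)) : IsMaximin A (π + c • d) := by
  refine ⟨hπd, fun π' hπ' => (hπ.2 π' hπ').trans (worstCase_mono fun π'' hπ'' => ?_)⟩
  rw [payoff_eq_vecMul_dotProduct, payoff_eq_vecMul_dotProduct, add_vecMul, smul_vecMul,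
    add_dotProduct, smul_dotProduct]
  exact le_add_of_nonneg_right (smul_nonneg hc (dotProduct_nonneg_of_nonneg hdA hπ''.1))

theorem exists_pos_isProb_add_smul {π d : Fin n → ℝ} (hpos : ∀ i, 0 < π i)
    (hsum : ∑ i, π i = 1) (hd : ∑ i, d i = 0) : ∃ c > (0 : ℝ), IsProb (π + c • d) := by
  have hnear : ∀ᶠ c in 𝓝 (0 : ℝ), ∀ i, 0 < π i + c * d i :=
    eventually_all.2 fun i => (Continuous.tendsto (by fun_prop) 0).eventually
      (lt_mem_nhds (by simpa using hpos i))
  obtain ⟨c, hc, hc0⟩ := ((hnear.filter_mono nhdsWithin_le_nhds).and self_mem_nhdsWithin).exists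
    (f := 𝓝[>] 0)
  refine ⟨c, hc0, fun i => (hc i).le, ?_⟩
  simp [sum_add_distrib, ← mul_sum, hsum, hd]

theorem eq_zero_of_forall_isMaximin_eq {πs d : Fin n → ℝ} (hpos : ∀ i, 0 < πs i)
    (hMax : IsMaximin A πs) (hUnique : ∀ π, IsMaximin A π → π = πs)
    (hd : ∑ i, d i = 0) (hdA : 0 ≤ d ᵥ* of A) : d = 0 := by
  obtain ⟨c, hc, hprob⟩ := exists_pos_isProb_add_smul hpos hMax.1.2 hd
  simpa [hc.ne'] using hUnique _ (hMax.add_smul hc.le hdA hprob)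

end Game

theorem stmt_12_general {n : ℕ} (A : Fin n → Fin n → ℝ)
    (πs : Fin n → ℝ) (hpos : ∀ i, 0 < πs i)
    (hMax : IsMaximin A πs)
    (hUnique : ∀ π, IsMaximin A π → π = πs)
    (u : Fin n → ℝ) (t : ℝ) (hu : IsProb u)
    (hKKT2 : ∀ j, u j * (∑ i, πs i * A i j - t) = 0)
    (hKKT3 : ∀ i, ∑ j, A i j * u j = t) :
    (∀ j, 0 < u j) ∧ (∀ j, ∑ i, πs i * A i j = t) := by
  have hu0 : u ≠ 0 := by
    rintro rfl
    simpa using hu.2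
  have hupos : ∀ j, 0 < u j := by
    intro j₀
    by_contra h
    obtain ⟨d, hd0, hsum, hdA⟩ := exists_ne_zero_sum_eq_zero_vecMul_nonneg (A := of A) le_rfl
      hu0 (funext hKKT3) (le_antisymm (not_lt.1 h) (hu.1 j₀))
    exact hd0 (eq_zero_of_forall_isMaximin_eq hpos hMax hUnique hsum hdA)
  exact ⟨hupos, fun j => sub_eq_zero.1 ((mul_eq_zero.1 (hKKT2 j)).resolve_left (hupos j).ne')⟩

theorem stmt_12 {n : ℕ} (A : Fin n → Fin n → ℝ)
    (πs : Fin n → ℝ) (hpos : ∀ i, 0 < πs i) (hsum : ∑ i, πs i = 1)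
    (hMax : IsMaximin A πs)
    (hUnique : ∀ π, IsMaximin A π → π = πs)
    (u : Fin n → ℝ) (t : ℝ) (hu : IsProb u)
    (hKKT1 : ∀ j, ∑ i, πs i * A i j ≤ t)
    (hKKT2 : ∀ j, u j * (∑ i, πs i * A i j - t) = 0)
    (hKKT3 : ∀ i, ∑ j, A i j * u j = t) :
    (∀ j, 0 < u j) ∧ (∀ j, ∑ i, πs i * A i j = t) :=
  stmt_12_general A πs hpos hMax hUnique u t hu hKKT2 hKKT3
end

section
/- There is no pair (C, f) with C ∈ ℝ a constant and f: (0,∞) → ℝ a smooth function, both independent of n and of π*, such that for every n ≥ 5 and every strictly positive probability vector π* on [n], the payoff matrix defined by α_{ii} = C and α_{ij} = f(π*_i/π*_j) for i ≠ j makes π* the unique maximin strategy of the zero-sum game with payoff Σ_{i,j} π_i π'_j α_{ij}. -/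
open Finset

lemma aux_affine (A1 B1 A2 B2 b : ℝ) (hb0 : 0 < b) (hb1 : b < 1)
    (hlt : A1 + B1*b < A2 + B2*b)
    (hmax : ∀ x, 0 ≤ x → x ≤ 1 → x ≠ b →
      min (A1 + B1*x) (A2 + B2*x) < min (A1 + B1*b) (A2 + B2*b)) : False := by
  set gap := (A2 + B2*b) - (A1 + B1*b) with hgapdef
  have hgap : 0 < gap := by rw [hgapdef]; linarith
  set D := |B1| + |B2| with hD
  have hD0 : 0 ≤ D := by positivity
  set ε := min b (min (1-b) (gap/(D+1))) with hε
  have hε0 : 0 < ε := lt_min hb0 (lt_min (by linarith) (by positivity))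
  have hεb : ε ≤ b := min_le_left _ _
  have hε1 : ε ≤ 1-b := le_trans (min_le_right _ _) (min_le_left _ _)
  have hεg : ε ≤ gap/(D+1) := le_trans (min_le_right _ _) (min_le_right _ _)
  have hsm : ε * D < gap := by
    have h1 : ε * D ≤ gap/(D+1) * D := mul_le_mul_of_nonneg_right hεg hD0
    have h2 : gap/(D+1)*D < gap := by
      rw [div_mul_eq_mul_div, div_lt_iff₀ (by linarith)]
      nlinarith
    exact h1.trans_lt h2
  have hkey : ∀ s : ℝ, |s| ≤ ε → A1 + B1*(b+s) < A2 + B2*(b+s) := by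
    intro s hs
    have h1 : B1*s ≤ |B1| * ε := by
      calc B1*s ≤ |B1*s| := le_abs_self _
        _ = |B1| * |s| := abs_mul _ _
        _ ≤ |B1| * ε := mul_le_mul_of_nonneg_left hs (abs_nonneg _)
    have h2 : -(B2*s) ≤ |B2| * ε := by
      calc -(B2*s) ≤ |B2*s| := neg_le_abs _
        _ = |B2| * |s| := abs_mul _ _
        _ ≤ |B2| * ε := mul_le_mul_of_nonneg_left hs (abs_nonneg _)
    have h3 : ε * (|B1| + |B2|) < gap := by rw [← hD]; exact hsm
    have h4 : ε * (|B1| + |B2|) = |B1| * ε + |B2| * ε := by ring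
    have e1 : B1*(b+s) = B1*b + B1*s := by ring
    have e2 : B2*(b+s) = B2*b + B2*s := by ring
    rw [e1, e2]
    rw [hgapdef] at h3
    rw [h4] at h3
    linarith
  have hminb : min (A1+B1*b) (A2+B2*b) = A1+B1*b := min_eq_left hlt.le
  have hne1 : b + ε ≠ b := fun h => hε0.ne' (by linarith)
  have hne2 : b - ε ≠ b := fun h => hε0.ne' (by linarith)
  have hplus := hmax (b+ε) (by linarith) (by linarith) hne1
  have hminus := hmax (b-ε) (by linarith) (by linarith) hne2
  have hp2 : A1 + B1*(b+ε) < A2 + B2*(b+ε) := hkey ε (by rw [abs_of_pos hε0])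
  have hm2 : A1 + B1*(b-ε) < A2 + B2*(b-ε) := by
    have h := hkey (-ε) (by rw [abs_neg, abs_of_pos hε0])
    have e : b + -ε = b - ε := by ring
    rwa [e] at h
  rw [min_eq_left hp2.le, hminb] at hplus
  rw [min_eq_left hm2.le, hminb] at hminus
  nlinarith

lemma worst_eq {n : ℕ} (A : Fin n → Fin n → ℝ) (π : Fin n → ℝ) (M : ℝ)
    (hlb : ∀ j, M ≤ ∑ i, π i * A i j)
    (hmem : ∃ j, (∑ i, π i * A i j) = M) :
    worstCase A π = M := by
  have hpay : ∀ π' : Fin n → ℝ, payoff A π π' = ∑ j, π' j * ∑ i, π i * A i j := by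
    intro π'
    unfold payoff
    rw [Finset.sum_comm]
    refine Finset.sum_congr rfl fun j _ => ?_
    rw [Finset.mul_sum]
    exact Finset.sum_congr rfl fun i _ => by ring
  obtain ⟨j₀, hj₀⟩ := hmem
  have hMmem : M ∈ (fun π' => payoff A π π') '' {π' | IsProb π'} := by
    refine ⟨fun j => if j = j₀ then 1 else 0, ⟨fun i => by dsimp only; split <;> norm_num, ?_⟩, ?_⟩
    · simp [Finset.sum_ite_eq']
    · show payoff A π _ = M
      rw [hpay]
      simp only [ite_mul, one_mul, zero_mul]
      rw [Finset.sum_ite_eq']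
      simp [hj₀]
  have hlb' : ∀ v ∈ (fun π' => payoff A π π') '' {π' | IsProb π'}, M ≤ v := by
    rintro v ⟨π', hπ', rfl⟩
    show M ≤ payoff A π π'
    rw [hpay]
    calc M = (∑ j, π' j) * M := by rw [hπ'.2, one_mul]
      _ = ∑ j, π' j * M := Finset.sum_mul _ _ _
      _ ≤ ∑ j, π' j * (∑ i, π i * A i j) :=
        Finset.sum_le_sum fun j _ => mul_le_mul_of_nonneg_left (hlb j) (hπ'.1 j)
  exact le_antisymm (csInf_le ⟨M, hlb'⟩ hMmem) (le_csInf ⟨M, hMmem⟩ hlb')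

noncomputable def pat (m : ℕ) (x : ℝ) : Fin (m+1) → ℝ :=
  fun i => if i = Fin.last m then x else (1-x)/m

lemma pat_castSucc (m : ℕ) (x : ℝ) (i : Fin m) : pat m x i.castSucc = (1-x)/m :=
  if_neg (Fin.castSucc_lt_last i).ne

lemma pat_last (m : ℕ) (x : ℝ) : pat m x (Fin.last m) = x := if_pos rfl

lemma sum_ite_eq_card {m : ℕ} (j : Fin m) (c u : ℝ) :
    (∑ i : Fin m, if i = j then c else u) = ((m:ℝ)-1) * u + c := by
  have h : ∀ i : Fin m, (if i = j then c else u) = u + (if i = j then c - u else 0) := by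
    intro i; split <;> ring
  rw [Finset.sum_congr rfl fun i _ => h i, Finset.sum_add_distrib, Finset.sum_const,
    Finset.card_univ, Fintype.card_fin, nsmul_eq_mul, Finset.sum_ite_eq']
  simp only [Finset.mem_univ, if_true]
  ring
lemma key (C : ℝ) (f : ℝ → ℝ)
    (H : ∀ (n : ℕ), 5 ≤ n → ∀ πs : Fin n → ℝ, (∀ i, 0 < πs i) → (∑ i, πs i = 1) →
        IsMaximin (fun i j => if i = j then C else f (πs i / πs j)) πs ∧
        ∀ π, IsMaximin (fun i j => if i = j then C else f (πs i / πs j)) π → π = πs)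
    (m : ℕ) (hm : 4 ≤ m) (r : ℝ) (hr : 0 < r) :
    r * (((m:ℝ)-1) * f 1 + C) + f (1/r) = (m:ℝ) * r * f r + C := by
  have hm0 : (0:ℝ) < m := by
    have : (4:ℝ) ≤ m := by exact_mod_cast hm
    linarith
  have hmne : (m:ℝ) ≠ 0 := ne_of_gt hm0
  have hden : (0:ℝ) < m*r+1 := by positivity
  set b : ℝ := 1 / ((m:ℝ)*r+1) with hbdef
  have hb0 : 0 < b := by rw [hbdef]; positivity
  have hb1 : b < 1 := by rw [hbdef, div_lt_one hden]; nlinarith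
  have h1b : 0 < 1 - b := by linarith
  -- ratios
  have hab : (1 - b)/m / b = r := by
    rw [hbdef]; field_simp; ring
  have hba : b / ((1-b)/m) = 1/r := by
    rw [hbdef]; field_simp; ring
  have haa : ((1-b)/m) / ((1-b)/m) = 1 := div_self (by positivity)
  -- probability facts for the pattern family
  have hprob : ∀ x : ℝ, 0 ≤ x → x ≤ 1 → IsProb (pat m x) := by
    intro x h0 h1
    constructor
    · intro i
      unfold pat
      split
      · exact h0
      · exact div_nonneg (by linarith) hm0.le
    · rw [Fin.sum_univ_castSucc,
        Finset.sum_congr rfl (fun (i : Fin m) _ => pat_castSucc m x i), pat_last,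
        Finset.sum_const, Finset.card_univ, Fintype.card_fin, nsmul_eq_mul]
      field_simp; ring
  have hpos : ∀ i, 0 < pat m b i := by
    intro i
    unfold pat
    split
    · exact hb0
    · positivity
  obtain ⟨hmax, huniq⟩ := H (m+1) (by omega) (pat m b) hpos (hprob b hb0.le hb1.le).2
  set A : Fin (m+1) → Fin (m+1) → ℝ :=
    fun i j => if i = j then C else f (pat m b i / pat m b j) with hA
  -- column sums
  have hcol1 : ∀ x : ℝ, ∀ j : Fin m,
      (∑ i, pat m x i * A i j.castSucc) = (1-x)/m * (((m:ℝ)-1) * f 1 + C) + x * f (1/r) := by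
    intro x j
    have hterm : ∀ i : Fin m, pat m x i.castSucc * A i.castSucc j.castSucc
        = (1-x)/m * (if i = j then C else f 1) := by
      intro i
      simp only [hA, pat_castSucc, Fin.castSucc_inj, haa]
    have hterml : pat m x (Fin.last m) * A (Fin.last m) j.castSucc = x * f (1/r) := by
      simp only [hA, pat_castSucc, pat_last]
      rw [if_neg (Fin.castSucc_lt_last j).ne', hba]
    rw [Fin.sum_univ_castSucc, Finset.sum_congr rfl (fun i _ => hterm i), hterml,
      ← Finset.mul_sum, sum_ite_eq_card]
  have hcol2 : ∀ x : ℝ,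
      (∑ i, pat m x i * A i (Fin.last m)) = (1-x) * f r + x * C := by
    intro x
    have hterm : ∀ i : Fin m, pat m x i.castSucc * A i.castSucc (Fin.last m)
        = (1-x)/m * f r := by
      intro i
      simp only [hA, pat_castSucc, pat_last]
      rw [if_neg (Fin.castSucc_lt_last i).ne, hab]
    have hterml : pat m x (Fin.last m) * A (Fin.last m) (Fin.last m) = x * C := by
      simp only [hA, pat_last, if_pos rfl]
    rw [Fin.sum_univ_castSucc, Finset.sum_congr rfl (fun i _ => hterm i), hterml,
      Finset.sum_const, Finset.card_univ, Fintype.card_fin, nsmul_eq_mul]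
    field_simp
  -- the worst case of a pattern vector
  have hw : ∀ x : ℝ, 0 ≤ x → x ≤ 1 → worstCase A (pat m x)
      = min ((1-x)/m * (((m:ℝ)-1) * f 1 + C) + x * f (1/r)) ((1-x) * f r + x * C) := by
    intro x h0 h1
    apply worst_eq
    · intro j
      induction j using Fin.lastCases with
      | last => rw [hcol2]; exact min_le_right _ _
      | cast j => rw [hcol1]; exact min_le_left _ _
    · rcases le_total ((1-x)/m * (((m:ℝ)-1) * f 1 + C) + x * f (1/r)) ((1-x) * f r + x * C)
        with h | h
      · exact ⟨(⟨0, by omega⟩ : Fin m).castSucc, by rw [hcol1, min_eq_left h]⟩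
      · exact ⟨Fin.last m, by rw [hcol2, min_eq_right h]⟩
  -- strict maximality
  have hstrict : ∀ x : ℝ, 0 ≤ x → x ≤ 1 → x ≠ b →
      min ((1-x)/m * (((m:ℝ)-1) * f 1 + C) + x * f (1/r)) ((1-x) * f r + x * C)
        < min ((1-b)/m * (((m:ℝ)-1) * f 1 + C) + b * f (1/r)) ((1-b) * f r + b * C) := by
    intro x h0 h1 hxb
    have hle : worstCase A (pat m x) ≤ worstCase A (pat m b) := hmax.2 _ (hprob x h0 h1)
    rcases hle.lt_or_eq with hlt | heq
    · rw [hw x h0 h1, hw b hb0.le hb1.le] at hlt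
      exact hlt
    · exfalso
      have hmx : IsMaximin A (pat m x) :=
        ⟨hprob x h0 h1, fun ρ hρ => (hmax.2 ρ hρ).trans heq.ge⟩
      have hEq := huniq _ hmx
      have := congrFun hEq (Fin.last m)
      rw [pat_last, pat_last] at this
      exact hxb this
  -- reduce to affine form and conclude the cross equation
  set K : ℝ := ((m:ℝ)-1) * f 1 + C with hK
  have haff1 : ∀ x : ℝ, (1-x)/m * K + x * f (1/r) = K/m + (f (1/r) - K/m) * x := by
    intro x; ring
  have haff2 : ∀ x : ℝ, (1-x) * f r + x * C = f r + (C - f r) * x := by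
    intro x; ring
  have hcross : (1-b)/m * K + b * f (1/r) = (1-b) * f r + b * C := by
    rcases lt_trichotomy ((1-b)/m * K + b * f (1/r)) ((1-b) * f r + b * C) with h | h | h
    · exfalso
      apply aux_affine (K/m) (f (1/r) - K/m) (f r) (C - f r) b hb0 hb1
      · rw [← haff1, ← haff2]; exact h
      · intro x hx0 hx1 hxb
        rw [← haff1, ← haff2, ← haff1, ← haff2]
        exact hstrict x hx0 hx1 hxb
    · exact h
    · exfalso
      apply aux_affine (f r) (C - f r) (K/m) (f (1/r) - K/m) b hb0 hb1
      · rw [← haff1, ← haff2]; exact h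
      · intro x hx0 hx1 hxb
        rw [← haff1, ← haff2, ← haff1, ← haff2, min_comm, min_comm ((1-b) * f r + b * C)]
        exact hstrict x hx0 hx1 hxb
  -- extract the equation
  have hb' : 1 - b = (m:ℝ)*r*b := by
    rw [hbdef]; field_simp; ring
  have hrb : (1-b)/m = r*b := by
    rw [hb', mul_assoc, mul_div_cancel_left₀ _ hmne]
  rw [hrb, hb'] at hcross
  have hfin : b * (r * K + f (1/r)) = b * ((m:ℝ) * r * f r + C) := by
    linear_combination hcross
  have := mul_left_cancel₀ (ne_of_gt hb0) hfin
  rw [hK] at this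
  linarith
theorem stmt_17 :
    ¬ ∃ (C : ℝ) (f : ℝ → ℝ), ContDiffOn ℝ (⊤ : ℕ∞) f (Set.Ioi 0) ∧
      ∀ (n : ℕ), 5 ≤ n → ∀ πs : Fin n → ℝ, (∀ i, 0 < πs i) → (∑ i, πs i = 1) →
        IsMaximin (fun i j => if i = j then C else f (πs i / πs j)) πs ∧
        ∀ π, IsMaximin (fun i j => if i = j then C else f (πs i / πs j)) π → π = πs := by
  rintro ⟨C, f, -, H⟩
  -- f is constant on (0, ∞)
  have hfc : ∀ r : ℝ, 0 < r → f r = f 1 := by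
    intro r hr
    have h4 := key C f H 4 (by norm_num) r hr
    have h5 := key C f H 5 (by norm_num) r hr
    push_cast at h4 h5
    have h : r * f 1 = r * f r := by linear_combination h5 - h4
    exact (mul_left_cancel₀ (ne_of_gt hr) h).symm
  -- and its value is C
  have hf1C : f 1 = C := by
    have h4 := key C f H 4 (by norm_num) 2 (by norm_num)
    push_cast at h4
    rw [hfc 2 (by norm_num), hfc (1/2) (by norm_num)] at h4
    linarith
  -- uniform vector on Fin 5
  have hsum : ∑ _i : Fin 5, (1/5 : ℝ) = 1 := by
    rw [Finset.sum_const, Finset.card_univ, Fintype.card_fin, nsmul_eq_mul]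
    norm_num
  obtain ⟨hmax, huniq⟩ := H 5 le_rfl (fun _ => 1/5) (fun _ => by norm_num) hsum
  have hAeq : (fun i j => if i = j then C else
      f ((fun _ : Fin 5 => (1/5:ℝ)) i / (fun _ : Fin 5 => (1/5:ℝ)) j)) =
      (fun _ _ : Fin 5 => C) := by
    funext i j
    show (if i = j then C else f ((1/5:ℝ)/(1/5))) = C
    have h : (1/5:ℝ)/(1/5) = 1 := by norm_num
    rw [h, hf1C]
    split <;> rfl
  rw [hAeq] at huniq
  have hwC : ∀ ρ : Fin 5 → ℝ, IsProb ρ → worstCase (fun _ _ : Fin 5 => C) ρ = C := by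
    intro ρ hρ
    apply worst_eq
    · intro j
      rw [← Finset.sum_mul, hρ.2, one_mul]
    · exact ⟨0, by rw [← Finset.sum_mul, hρ.2, one_mul]⟩
  have he0 : IsProb (fun i : Fin 5 => if i = 0 then (1:ℝ) else 0) :=
    ⟨fun i => by dsimp only; split <;> norm_num, by simp [Finset.sum_ite_eq']⟩
  have hmaxe0 : IsMaximin (fun _ _ : Fin 5 => C) (fun i => if i = 0 then 1 else 0) :=
    ⟨he0, fun ρ hρ => le_of_eq ((hwC ρ hρ).trans (hwC _ he0).symm)⟩
  have hEq := huniq _ hmaxe0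
  have h1 := congrFun hEq 1
  simp only [show (1 : Fin 5) ≠ 0 by decide, if_neg, ite_false] at h1
  norm_num at h1
end

section
/- Consider the 6×6 payoff matrix A built from two 3-cycles: blocks S₁ = {1,2,3} and S₂ = {4,5,6}, where within each block A has diagonal Ψ(1/2) and cyclic off-diagonal entries Ψ(t₁), Ψ(1−t₁); A_{ij} = Ψ(t₂) for i ∈ S₁, j ∈ S₂; and A_{ij} = Ψ(1−t₂) for i ∈ S₂, j ∈ S₁. If Ψ(t₁) + Ψ(1/2) + Ψ(1−t₁) > 3Ψ(t₂) ≥ 3Ψ(1/2) > 3Ψ(1−t₂), then there exists a Nash equilibrium (μ, μ') of this game where μ assigns strictly positive probability to every index in S₂ (i.e., the Nash solution's support is not contained in S₁). -/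
open Finset

/-!
Both players use block-uniform strategies `(a, a, a, b, b, b)` and `(b, b, b, a, a, a)` with
`3a + 3b = 1`. Writing `s = Ψ(1/2) + Ψ(t₁) + Ψ(1-t₁)`, every pure strategy of either player then
earns `a s + 3 b Ψ(1-t₂)` or `b s + 3 a Ψ(t₂)`, and these agree for
`a : b = (s - 3Ψ(1-t₂)) : (s - 3Ψ(t₂))`. The hypotheses make both parts positive, and a pair of
strategies against which every pure reply earns the same amount is an equilibrium.
-/

section Equalizing

variable {n : ℕ} {A : Fin n → Fin n → ℝ} {π π' : Fin n → ℝ} {v : ℝ}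

lemma payoff_eq_of_rowSums_eq (hπ : IsProb π) (hrow : ∀ i, ∑ j, π' j * A i j = v) :
    payoff A π π' = v := by
  simp_rw [payoff, mul_assoc, ← mul_sum, hrow, ← sum_mul, hπ.2, one_mul]

lemma payoff_eq_of_colSums_eq (hπ' : IsProb π') (hcol : ∀ j, ∑ i, π i * A i j = v) :
    payoff A π π' = v := by
  rw [payoff, sum_comm]
  simp_rw [mul_comm (π _) (π' _), mul_assoc, ← mul_sum, hcol, ← sum_mul, hπ'.2, one_mul]

lemma isNash_of_equalizing (hπ : IsProb π) (hπ' : IsProb π')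
    (hrow : ∀ i, ∑ j, π' j * A i j = v) (hcol : ∀ j, ∑ i, π i * A i j = v) :
    IsNash A π π' := by
  refine ⟨hπ, hπ', fun σ hσ => ?_, fun σ' hσ' => ?_⟩
  · rw [payoff_eq_of_rowSums_eq hσ hrow, payoff_eq_of_rowSums_eq hπ hrow]
  · rw [payoff_eq_of_colSums_eq hπ' hcol, payoff_eq_of_colSums_eq hσ' hcol]

end Equalizing

def twoCycleMatrix (c x y p q : ℝ) : Matrix (Fin 6) (Fin 6) ℝ :=
  !![c, x, y, p, p, p;
     y, c, x, p, p, p;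
     x, y, c, p, p, p;
     q, q, q, c, x, y;
     q, q, q, y, c, x;
     q, q, q, x, y, c]

def blockVec (a b : ℝ) : Fin 6 → ℝ := ![a, a, a, b, b, b]

lemma isProb_blockVec {a b : ℝ} (ha : 0 ≤ a) (hb : 0 ≤ b) (hab : 3 * a + 3 * b = 1) :
    IsProb (blockVec a b) := by
  refine ⟨fun i => ?_, ?_⟩
  · fin_cases i <;> assumption
  · simp only [blockVec, Fin.sum_univ_six, Matrix.cons_val]
    linarith

section TwoCycle

variable {c x y p q a b : ℝ}

lemma twoCycleMatrix_rowSums (hbal : a * (x + c + y) + 3 * b * q = b * (x + c + y) + 3 * a * p)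
    (i : Fin 6) : ∑ j, blockVec b a j * twoCycleMatrix c x y p q i j
      = b * (x + c + y) + 3 * a * p := by
  fin_cases i <;>
    simp only [blockVec, twoCycleMatrix, Fin.zero_eta, Fin.mk_one, Fin.reduceFinMk, Fin.isValue,
      Matrix.of_apply, Matrix.cons_val', Matrix.cons_val, Matrix.cons_val_fin_one,
      Matrix.cons_val_zero, Matrix.cons_val_one, Fin.sum_univ_six] <;> linarith

lemma twoCycleMatrix_colSums (hbal : a * (x + c + y) + 3 * b * q = b * (x + c + y) + 3 * a * p)
    (j : Fin 6) : ∑ i, blockVec a b i * twoCycleMatrix c x y p q i j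
      = b * (x + c + y) + 3 * a * p := by
  fin_cases j <;>
    simp only [blockVec, twoCycleMatrix, Fin.zero_eta, Fin.mk_one, Fin.reduceFinMk, Fin.isValue,
      Matrix.of_apply, Matrix.cons_val', Matrix.cons_val, Matrix.cons_val_fin_one,
      Matrix.cons_val_zero, Matrix.cons_val_one, Fin.sum_univ_six] <;> linarith

end TwoCycle

lemma exists_isNash_twoCycleMatrix {c x y p q : ℝ} (hp : 3 * p < x + c + y)
    (hq : 3 * q < x + c + y) :
    ∃ a b : ℝ, 0 < b ∧ IsNash (twoCycleMatrix c x y p q) (blockVec a b) (blockVec b a) := by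
  set s := x + c + y
  have hE : 0 < 2 * s - 3 * p - 3 * q := by linarith
  have hE₀ := hE.ne'
  set a := (s - 3 * q) / (3 * (2 * s - 3 * p - 3 * q))
  set b := (s - 3 * p) / (3 * (2 * s - 3 * p - 3 * q))
  have ha : 0 < a := div_pos (by linarith) (by positivity)
  have hb : 0 < b := div_pos (by linarith) (by positivity)
  have hab : 3 * a + 3 * b = 1 := by
    simp only [a, b]
    rw [← mul_add, ← add_div, ← mul_div_assoc, mul_div_mul_left _ _ three_ne_zero,
      div_eq_one_iff_eq hE₀]
    ring
  have hbal : a * s + 3 * b * q = b * s + 3 * a * p := by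
    simp only [a, b]
    field_simp
    ring
  exact ⟨a, b, hb, isNash_of_equalizing (isProb_blockVec ha.le hb.le hab)
    (isProb_blockVec hb.le ha.le (by linarith)) (twoCycleMatrix_rowSums hbal)
    (twoCycleMatrix_colSums hbal)⟩

theorem stmt_19 (Ψ : ℝ → ℝ) (t₁ t₂ : ℝ)
    (h1 : 3 * Ψ t₂ < Ψ t₁ + Ψ (1 / 2) + Ψ (1 - t₁))
    (h2 : Ψ (1 / 2) ≤ Ψ t₂)
    (h3 : Ψ (1 - t₂) < Ψ (1 / 2)) :
    ∃ μ μ' : Fin 6 → ℝ,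
      IsNash
        (fun i j => (!![Ψ (1/2), Ψ t₁, Ψ (1-t₁), Ψ t₂, Ψ t₂, Ψ t₂;
                        Ψ (1-t₁), Ψ (1/2), Ψ t₁, Ψ t₂, Ψ t₂, Ψ t₂;
                        Ψ t₁, Ψ (1-t₁), Ψ (1/2), Ψ t₂, Ψ t₂, Ψ t₂;
                        Ψ (1-t₂), Ψ (1-t₂), Ψ (1-t₂), Ψ (1/2), Ψ t₁, Ψ (1-t₁);
                        Ψ (1-t₂), Ψ (1-t₂), Ψ (1-t₂), Ψ (1-t₁), Ψ (1/2), Ψ t₁;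
                        Ψ (1-t₂), Ψ (1-t₂), Ψ (1-t₂), Ψ t₁, Ψ (1-t₁), Ψ (1/2)]
            : Matrix (Fin 6) (Fin 6) ℝ) i j) μ μ' ∧
      ∀ i : Fin 6, 3 ≤ (i : ℕ) → 0 < μ i := by
  obtain ⟨a, b, hb, hNash⟩ :=
    exists_isNash_twoCycleMatrix (c := Ψ (1 / 2)) (x := Ψ t₁) (y := Ψ (1 - t₁)) (p := Ψ t₂)
      (q := Ψ (1 - t₂)) h1 (by linarith)
  refine ⟨blockVec a b, blockVec b a, hNash, fun i hi => ?_⟩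
  fin_cases i <;> first | exact hb | simp at hi
end
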